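/- arXiv:1910.05706 — 2 statements merged into one kernel-verified Lean document; each statement's English description precedes it below -/
import Mathlib

section
/- For every real number c in the open interval (1/4, 3/4), the denominators do not vanish (112c − 6 ≠ 0 and 106 − 112c ≠ 0), and (−30c + 12)/(112c − 6) + (30c − 18)/(106 − 112c) = 0 if and only if c = 1/2 + (1/4)√(5/7) or c = 1/2 − (1/4)√(5/7). -/
/-! Over the common denominator `(112c − 6)(106 − 112c)`, positive on `(1/4, 3/4)`, the numerator
is `60 (112c² − 112c + 23)`, a quadratic of discriminant `2240 = (56 √(5/7))²`. -/

lemma futaki_sum_eq_div {c : ℝ} (h₁ : 112 * c - 6 ≠ 0) (h₂ : 106 - 112 * c ≠ 0) :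
    (-30 * c + 12) / (112 * c - 6) + (30 * c - 18) / (106 - 112 * c) =
      60 * (112 * (c * c) + (-112) * c + 23) / ((112 * c - 6) * (106 - 112 * c)) := by
  rw [div_add_div _ _ h₁ h₂]
  ring

lemma discrim_futaki_quadratic : discrim (112 : ℝ) (-112) 23 = 56 * √(5/7) * (56 * √(5/7)) := by
  have hs : √(5/7 : ℝ) * √(5/7) = 5/7 := Real.mul_self_sqrt (by norm_num)
  rw [discrim, mul_mul_mul_comm, hs]
  norm_num

lemma futaki_quadratic_eq_zero_iff (c : ℝ) :
    112 * (c * c) + (-112) * c + 23 = 0 ↔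
      c = 1/2 + (1/4) * √(5/7) ∨ c = 1/2 - (1/4) * √(5/7) := by
  rw [quadratic_eq_zero_iff (by norm_num) discrim_futaki_quadratic]
  constructor <;> rintro (h | h) <;> [left; right; left; right] <;> linarith

/-- For every c ∈ (1/4, 3/4) the denominators 112c − 6 and 106 − 112c do not vanish, and
(−30c + 12)/(112c − 6) + (30c − 18)/(106 − 112c) = 0 iff
c = 1/2 + (1/4)√(5/7) or c = 1/2 − (1/4)√(5/7). -/
theorem stmt_8 (c : ℝ) (hc : c ∈ Set.Ioo (1/4 : ℝ) (3/4)) :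
    112 * c - 6 ≠ 0 ∧ 106 - 112 * c ≠ 0 ∧
    ((-30 * c + 12) / (112 * c - 6) + (30 * c - 18) / (106 - 112 * c) = 0 ↔
      c = 1/2 + (1/4) * Real.sqrt (5/7) ∨ c = 1/2 - (1/4) * Real.sqrt (5/7)) := by
  obtain ⟨hc₁, hc₂⟩ := hc
  have h₁ : 112 * c - 6 ≠ 0 := by linarith
  have h₂ : 106 - 112 * c ≠ 0 := by linarith
  refine ⟨h₁, h₂, ?_⟩
  rw [futaki_sum_eq_div h₁ h₂, div_eq_zero_iff, or_iff_left (mul_ne_zero h₁ h₂),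
    mul_eq_zero, or_iff_right (by norm_num), futaki_quadratic_eq_zero_iff]
end

section
/- Let c be a real number in the open interval (1/4, 3/4). In the polynomial ring ℝ[a,b], set f_c = −1/2 + (2c − 1/2)a + 2b, g_c = 1/2 + (2c + 1/2)a + b, e = −2 + 4a − 4b + 16ab − 8b² + 48ab², and define V₁, N₁, V₂, N₂ as the coefficients of the monomial a·b² in (f_c⁴ − g_c⁴)·e, (f_c⁵ − g_c⁵)·e, (f_{1−c}⁴ − g_{1−c}⁴)·e, and (f_{1−c}⁵ − g_{1−c}⁵)·e respectively. Then V₁ ≠ 0, V₂ ≠ 0, and N₁/V₁ + N₂/V₂ = −15(112c² − 112c + 23)/((56c − 3)(56c − 53)); moreover N₁/V₁ + N₂/V₂ = 0 if and only if c = 1/2 + (1/4)√(5/7) or c = 1/2 − (1/4)√(5/7). -/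
open MvPolynomial

set_option maxRecDepth 10000
set_option maxHeartbeats 1000000

private lemma coeffd (i j k l : ℕ) :
    coeff (Finsupp.single 0 i + Finsupp.single 1 j : Fin 2 →₀ ℕ)
      ((X 0 : MvPolynomial (Fin 2) ℝ) ^ k * X 1 ^ l) = if k = i ∧ l = j then 1 else 0 := by
  rw [X_pow_eq_monomial, X_pow_eq_monomial, monomial_mul, one_mul, coeff_monomial]
  have hiff : (Finsupp.single (0 : Fin 2) k + Finsupp.single 1 l)
      = Finsupp.single (0 : Fin 2) i + Finsupp.single 1 j ↔ (k = i ∧ l = j) := by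
    constructor
    · intro h
      constructor
      · have := DFunLike.congr_fun h 0
        simpa using this
      · have := DFunLike.congr_fun h 1
        simpa using this
    · rintro ⟨rfl, rfl⟩; rfl
  simp only [hiff]

private lemma shiftX0 (p : MvPolynomial (Fin 2) ℝ) (i j : ℕ) :
    coeff (Finsupp.single 0 (i+1) + Finsupp.single 1 j) (p * X 0)
      = coeff (Finsupp.single 0 i + Finsupp.single 1 j) p := by
  have h : (Finsupp.single 0 (i+1) + Finsupp.single 1 j : Fin 2 →₀ ℕ)
      = (Finsupp.single 0 i + Finsupp.single 1 j) + Finsupp.single 0 1 := by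
    rw [Finsupp.single_add, add_right_comm]
  rw [h, coeff_mul_X]

private lemma shiftX1 (p : MvPolynomial (Fin 2) ℝ) (i j : ℕ) :
    coeff (Finsupp.single 0 i + Finsupp.single 1 (j+1)) (p * X 1)
      = coeff (Finsupp.single 0 i + Finsupp.single 1 j) p := by
  have h : (Finsupp.single 0 i + Finsupp.single 1 (j+1) : Fin 2 →₀ ℕ)
      = (Finsupp.single 0 i + Finsupp.single 1 j) + Finsupp.single 1 1 := by
    rw [Finsupp.single_add, add_assoc]
  rw [h, coeff_mul_X]

private lemma decompE (p : MvPolynomial (Fin 2) ℝ) :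
    coeff (Finsupp.single 0 1 + Finsupp.single 1 2 : Fin 2 →₀ ℕ) (p * (-2 + 4 * X 0 - 4 * X 1 + 16 * X 0 * X 1 - 8 * X 1 ^ 2 + 48 * X 0 * X 1 ^ 2))
      = -2 * coeff (Finsupp.single 0 1 + Finsupp.single 1 2) p
        + 4 * coeff (Finsupp.single 0 0 + Finsupp.single 1 2) p
        - 4 * coeff (Finsupp.single 0 1 + Finsupp.single 1 1) p
        + 16 * coeff (Finsupp.single 0 0 + Finsupp.single 1 1) p
        - 8 * coeff (Finsupp.single 0 1 + Finsupp.single 1 0) p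
        + 48 * coeff (Finsupp.single 0 0 + Finsupp.single 1 0) p := by
  have hA : ∀ q : MvPolynomial (Fin 2) ℝ, coeff (Finsupp.single 0 1 + Finsupp.single 1 2) (q * X 0)
      = coeff (Finsupp.single 0 0 + Finsupp.single 1 2) q := fun q => by
    simpa using shiftX0 q 0 2
  have hB : ∀ q : MvPolynomial (Fin 2) ℝ, coeff (Finsupp.single 0 1 + Finsupp.single 1 2) (q * X 1)
      = coeff (Finsupp.single 0 1 + Finsupp.single 1 1) q := fun q => by
    simpa using shiftX1 q 1 1
  have hE : ∀ q : MvPolynomial (Fin 2) ℝ, coeff (Finsupp.single 0 1 + Finsupp.single 1 1) (q * X 0)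
      = coeff (Finsupp.single 0 0 + Finsupp.single 1 1) q := fun q => by
    simpa using shiftX0 q 0 1
  have hF : ∀ q : MvPolynomial (Fin 2) ℝ, coeff (Finsupp.single 0 1 + Finsupp.single 1 0) (q * X 0)
      = coeff (Finsupp.single 0 0 + Finsupp.single 1 0) q := fun q => by
    simpa using shiftX0 q 0 0
  have hB' : ∀ q : MvPolynomial (Fin 2) ℝ, coeff (Finsupp.single 0 0 + Finsupp.single 1 2) (q * X 1)
      = coeff (Finsupp.single 0 0 + Finsupp.single 1 1) q := fun q => by
    simpa using shiftX1 q 0 1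
  have hC' : ∀ q : MvPolynomial (Fin 2) ℝ, coeff (Finsupp.single 0 1 + Finsupp.single 1 1) (q * X 1)
      = coeff (Finsupp.single 0 1 + Finsupp.single 1 0) q := fun q => by
    simpa using shiftX1 q 1 0
  have hD : ∀ q : MvPolynomial (Fin 2) ℝ, coeff (Finsupp.single 0 0 + Finsupp.single 1 1) (q * X 1)
      = coeff (Finsupp.single 0 0 + Finsupp.single 1 0) q := fun q => by
    simpa using shiftX1 q 0 0
  have hdec : p * (-2 + 4 * X 0 - 4 * X 1 + 16 * X 0 * X 1 - 8 * X 1 ^ 2 + 48 * X 0 * X 1 ^ 2)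
      = C (-2 : ℝ) * p + C (4 : ℝ) * (p * X 0) + C (-4 : ℝ) * (p * X 1)
        + C (16 : ℝ) * ((p * X 0) * X 1) + C (-8 : ℝ) * ((p * X 1) * X 1)
        + C (48 : ℝ) * (((p * X 0) * X 1) * X 1) := by
    simp only [map_neg, map_ofNat]
    ring
  rw [hdec]
  simp only [coeff_add, coeff_C_mul]
  simp only [hB, hC', hA, hE, hF]
  ring

private lemma pow4f (u : ℝ) :
    ((-C (1/2 : ℝ) + C u * X 0 + 2 * X 1) : MvPolynomial (Fin 2) ℝ) ^ 4 =
      C ((16:ℝ)) * (X 0 ^ 0 * X 1 ^ 4) +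
      C ((32:ℝ) * u^1) * (X 0 ^ 1 * X 1 ^ 3) +
      C ((24:ℝ) * u^2) * (X 0 ^ 2 * X 1 ^ 2) +
      C ((8:ℝ) * u^3) * (X 0 ^ 3 * X 1 ^ 1) +
      C ((1:ℝ) * u^4) * (X 0 ^ 4 * X 1 ^ 0) +
      C ((-32:ℝ) * (1/2:ℝ)^1) * (X 0 ^ 0 * X 1 ^ 3) +
      C ((-48:ℝ) * u^1 * (1/2:ℝ)^1) * (X 0 ^ 1 * X 1 ^ 2) +
      C ((-24:ℝ) * u^2 * (1/2:ℝ)^1) * (X 0 ^ 2 * X 1 ^ 1) +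
      C ((-4:ℝ) * u^3 * (1/2:ℝ)^1) * (X 0 ^ 3 * X 1 ^ 0) +
      C ((24:ℝ) * (1/2:ℝ)^2) * (X 0 ^ 0 * X 1 ^ 2) +
      C ((24:ℝ) * u^1 * (1/2:ℝ)^2) * (X 0 ^ 1 * X 1 ^ 1) +
      C ((6:ℝ) * u^2 * (1/2:ℝ)^2) * (X 0 ^ 2 * X 1 ^ 0) +
      C ((-8:ℝ) * (1/2:ℝ)^3) * (X 0 ^ 0 * X 1 ^ 1) +
      C ((-4:ℝ) * u^1 * (1/2:ℝ)^3) * (X 0 ^ 1 * X 1 ^ 0) +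
      C ((1:ℝ) * (1/2:ℝ)^4) * (X 0 ^ 0 * X 1 ^ 0) := by
  simp only [map_mul, map_pow, map_ofNat, map_neg, map_one]
  ring

private lemma pow5f (u : ℝ) :
    ((-C (1/2 : ℝ) + C u * X 0 + 2 * X 1) : MvPolynomial (Fin 2) ℝ) ^ 5 =
      C ((32:ℝ)) * (X 0 ^ 0 * X 1 ^ 5) +
      C ((80:ℝ) * u^1) * (X 0 ^ 1 * X 1 ^ 4) +
      C ((80:ℝ) * u^2) * (X 0 ^ 2 * X 1 ^ 3) +
      C ((40:ℝ) * u^3) * (X 0 ^ 3 * X 1 ^ 2) +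
      C ((10:ℝ) * u^4) * (X 0 ^ 4 * X 1 ^ 1) +
      C ((1:ℝ) * u^5) * (X 0 ^ 5 * X 1 ^ 0) +
      C ((-80:ℝ) * (1/2:ℝ)^1) * (X 0 ^ 0 * X 1 ^ 4) +
      C ((-160:ℝ) * u^1 * (1/2:ℝ)^1) * (X 0 ^ 1 * X 1 ^ 3) +
      C ((-120:ℝ) * u^2 * (1/2:ℝ)^1) * (X 0 ^ 2 * X 1 ^ 2) +
      C ((-40:ℝ) * u^3 * (1/2:ℝ)^1) * (X 0 ^ 3 * X 1 ^ 1) +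
      C ((-5:ℝ) * u^4 * (1/2:ℝ)^1) * (X 0 ^ 4 * X 1 ^ 0) +
      C ((80:ℝ) * (1/2:ℝ)^2) * (X 0 ^ 0 * X 1 ^ 3) +
      C ((120:ℝ) * u^1 * (1/2:ℝ)^2) * (X 0 ^ 1 * X 1 ^ 2) +
      C ((60:ℝ) * u^2 * (1/2:ℝ)^2) * (X 0 ^ 2 * X 1 ^ 1) +
      C ((10:ℝ) * u^3 * (1/2:ℝ)^2) * (X 0 ^ 3 * X 1 ^ 0) +
      C ((-40:ℝ) * (1/2:ℝ)^3) * (X 0 ^ 0 * X 1 ^ 2) +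
      C ((-40:ℝ) * u^1 * (1/2:ℝ)^3) * (X 0 ^ 1 * X 1 ^ 1) +
      C ((-10:ℝ) * u^2 * (1/2:ℝ)^3) * (X 0 ^ 2 * X 1 ^ 0) +
      C ((10:ℝ) * (1/2:ℝ)^4) * (X 0 ^ 0 * X 1 ^ 1) +
      C ((5:ℝ) * u^1 * (1/2:ℝ)^4) * (X 0 ^ 1 * X 1 ^ 0) +
      C ((-1:ℝ) * (1/2:ℝ)^5) * (X 0 ^ 0 * X 1 ^ 0) := by
  simp only [map_mul, map_pow, map_ofNat, map_neg, map_one]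
  ring

private lemma pow4g (v : ℝ) :
    ((C (1/2 : ℝ) + C v * X 0 + X 1) : MvPolynomial (Fin 2) ℝ) ^ 4 =
      C ((1:ℝ)) * (X 0 ^ 0 * X 1 ^ 4) +
      C ((4:ℝ) * v^1) * (X 0 ^ 1 * X 1 ^ 3) +
      C ((6:ℝ) * v^2) * (X 0 ^ 2 * X 1 ^ 2) +
      C ((4:ℝ) * v^3) * (X 0 ^ 3 * X 1 ^ 1) +
      C ((1:ℝ) * v^4) * (X 0 ^ 4 * X 1 ^ 0) +
      C ((4:ℝ) * (1/2:ℝ)^1) * (X 0 ^ 0 * X 1 ^ 3) +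
      C ((12:ℝ) * v^1 * (1/2:ℝ)^1) * (X 0 ^ 1 * X 1 ^ 2) +
      C ((12:ℝ) * v^2 * (1/2:ℝ)^1) * (X 0 ^ 2 * X 1 ^ 1) +
      C ((4:ℝ) * v^3 * (1/2:ℝ)^1) * (X 0 ^ 3 * X 1 ^ 0) +
      C ((6:ℝ) * (1/2:ℝ)^2) * (X 0 ^ 0 * X 1 ^ 2) +
      C ((12:ℝ) * v^1 * (1/2:ℝ)^2) * (X 0 ^ 1 * X 1 ^ 1) +
      C ((6:ℝ) * v^2 * (1/2:ℝ)^2) * (X 0 ^ 2 * X 1 ^ 0) +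
      C ((4:ℝ) * (1/2:ℝ)^3) * (X 0 ^ 0 * X 1 ^ 1) +
      C ((4:ℝ) * v^1 * (1/2:ℝ)^3) * (X 0 ^ 1 * X 1 ^ 0) +
      C ((1:ℝ) * (1/2:ℝ)^4) * (X 0 ^ 0 * X 1 ^ 0) := by
  simp only [map_mul, map_pow, map_ofNat, map_neg, map_one]
  ring

private lemma pow5g (v : ℝ) :
    ((C (1/2 : ℝ) + C v * X 0 + X 1) : MvPolynomial (Fin 2) ℝ) ^ 5 =
      C ((1:ℝ)) * (X 0 ^ 0 * X 1 ^ 5) +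
      C ((5:ℝ) * v^1) * (X 0 ^ 1 * X 1 ^ 4) +
      C ((10:ℝ) * v^2) * (X 0 ^ 2 * X 1 ^ 3) +
      C ((10:ℝ) * v^3) * (X 0 ^ 3 * X 1 ^ 2) +
      C ((5:ℝ) * v^4) * (X 0 ^ 4 * X 1 ^ 1) +
      C ((1:ℝ) * v^5) * (X 0 ^ 5 * X 1 ^ 0) +
      C ((5:ℝ) * (1/2:ℝ)^1) * (X 0 ^ 0 * X 1 ^ 4) +
      C ((20:ℝ) * v^1 * (1/2:ℝ)^1) * (X 0 ^ 1 * X 1 ^ 3) +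
      C ((30:ℝ) * v^2 * (1/2:ℝ)^1) * (X 0 ^ 2 * X 1 ^ 2) +
      C ((20:ℝ) * v^3 * (1/2:ℝ)^1) * (X 0 ^ 3 * X 1 ^ 1) +
      C ((5:ℝ) * v^4 * (1/2:ℝ)^1) * (X 0 ^ 4 * X 1 ^ 0) +
      C ((10:ℝ) * (1/2:ℝ)^2) * (X 0 ^ 0 * X 1 ^ 3) +
      C ((30:ℝ) * v^1 * (1/2:ℝ)^2) * (X 0 ^ 1 * X 1 ^ 2) +
      C ((30:ℝ) * v^2 * (1/2:ℝ)^2) * (X 0 ^ 2 * X 1 ^ 1) +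
      C ((10:ℝ) * v^3 * (1/2:ℝ)^2) * (X 0 ^ 3 * X 1 ^ 0) +
      C ((10:ℝ) * (1/2:ℝ)^3) * (X 0 ^ 0 * X 1 ^ 2) +
      C ((20:ℝ) * v^1 * (1/2:ℝ)^3) * (X 0 ^ 1 * X 1 ^ 1) +
      C ((10:ℝ) * v^2 * (1/2:ℝ)^3) * (X 0 ^ 2 * X 1 ^ 0) +
      C ((5:ℝ) * (1/2:ℝ)^4) * (X 0 ^ 0 * X 1 ^ 1) +
      C ((5:ℝ) * v^1 * (1/2:ℝ)^4) * (X 0 ^ 1 * X 1 ^ 0) +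
      C ((1:ℝ) * (1/2:ℝ)^5) * (X 0 ^ 0 * X 1 ^ 0) := by
  simp only [map_mul, map_pow, map_ofNat, map_neg, map_one]
  ring

private lemma quant4 (u v : ℝ) :
    coeff (Finsupp.single 0 1 + Finsupp.single 1 2 : Fin 2 →₀ ℕ)
      (((-C (1/2 : ℝ) + C u * X 0 + 2 * X 1) ^ 4 - (C (1/2 : ℝ) + C v * X 0 + X 1) ^ 4) * (-2 + 4 * X 0 - 4 * X 1 + 16 * X 0 * X 1 - 8 * X 1 ^ 2 + 48 * X 0 * X 1 ^ 2))
      = (24:ℝ) * v^1 * (1/2:ℝ)^1 + (96:ℝ) * u^1 * (1/2:ℝ)^1 + (72:ℝ) * (1/2:ℝ)^2 + (48:ℝ) * v^1 * (1/2:ℝ)^2 + (-96:ℝ) * u^1 * (1/2:ℝ)^2 + (-192:ℝ) * (1/2:ℝ)^3 + (32:ℝ) * v^1 * (1/2:ℝ)^3 + (32:ℝ) * u^1 * (1/2:ℝ)^3 := by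
  rw [decompE]
  simp only [coeff_sub, pow4f, pow4g, coeff_add, coeff_C_mul, coeffd]
  norm_num
  try ring

private lemma quant5 (u v : ℝ) :
    coeff (Finsupp.single 0 1 + Finsupp.single 1 2 : Fin 2 →₀ ℕ)
      (((-C (1/2 : ℝ) + C u * X 0 + 2 * X 1) ^ 5 - (C (1/2 : ℝ) + C v * X 0 + X 1) ^ 5) * (-2 + 4 * X 0 - 4 * X 1 + 16 * X 0 * X 1 - 8 * X 1 ^ 2 + 48 * X 0 * X 1 ^ 2))
      = (60:ℝ) * v^1 * (1/2:ℝ)^2 + (-240:ℝ) * u^1 * (1/2:ℝ)^2 + (-200:ℝ) * (1/2:ℝ)^3 + (80:ℝ) * v^1 * (1/2:ℝ)^3 + (160:ℝ) * u^1 * (1/2:ℝ)^3 + (80:ℝ) * (1/2:ℝ)^4 + (40:ℝ) * v^1 * (1/2:ℝ)^4 + (-40:ℝ) * u^1 * (1/2:ℝ)^4 + (-96:ℝ) * (1/2:ℝ)^5 := by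
  rw [decompE]
  simp only [coeff_sub, pow5f, pow5g, coeff_add, coeff_C_mul, coeffd]
  norm_num
  try ring

/-- For c ∈ (1/4, 3/4), with V₁, N₁, V₂, N₂ the coefficients of a·b² in
(f_c⁴ − g_c⁴)·e, (f_c⁵ − g_c⁵)·e, (f_{1−c}⁴ − g_{1−c}⁴)·e, (f_{1−c}⁵ − g_{1−c}⁵)·e,
one has V₁ ≠ 0, V₂ ≠ 0, N₁/V₁ + N₂/V₂ = −15(112c² − 112c + 23)/((56c − 3)(56c − 53)),
and N₁/V₁ + N₂/V₂ = 0 iff c = 1/2 ± (1/4)√(5/7). -/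
theorem stmt_9 (c : ℝ) (hc : c ∈ Set.Ioo (1/4 : ℝ) (3/4)) :
    let a : MvPolynomial (Fin 2) ℝ := X 0
    let b : MvPolynomial (Fin 2) ℝ := X 1
    let fc : MvPolynomial (Fin 2) ℝ := -C (1/2 : ℝ) + C (2 * c - 1/2) * a + 2 * b
    let gc : MvPolynomial (Fin 2) ℝ := C (1/2 : ℝ) + C (2 * c + 1/2) * a + b
    let fc' : MvPolynomial (Fin 2) ℝ := -C (1/2 : ℝ) + C (2 * (1 - c) - 1/2) * a + 2 * b
    let gc' : MvPolynomial (Fin 2) ℝ := C (1/2 : ℝ) + C (2 * (1 - c) + 1/2) * a + b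
    let e : MvPolynomial (Fin 2) ℝ := -2 + 4 * a - 4 * b + 16 * a * b - 8 * b ^ 2 + 48 * a * b ^ 2
    let d : Fin 2 →₀ ℕ := Finsupp.single 0 1 + Finsupp.single 1 2
    let V₁ : ℝ := coeff d ((fc ^ 4 - gc ^ 4) * e)
    let N₁ : ℝ := coeff d ((fc ^ 5 - gc ^ 5) * e)
    let V₂ : ℝ := coeff d ((fc' ^ 4 - gc' ^ 4) * e)
    let N₂ : ℝ := coeff d ((fc' ^ 5 - gc' ^ 5) * e)
    V₁ ≠ 0 ∧ V₂ ≠ 0 ∧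
    N₁ / V₁ + N₂ / V₂ = -15 * (112 * c ^ 2 - 112 * c + 23) / ((56 * c - 3) * (56 * c - 53)) ∧
    (N₁ / V₁ + N₂ / V₂ = 0 ↔
      c = 1/2 + (1/4) * Real.sqrt (5/7) ∨ c = 1/2 - (1/4) * Real.sqrt (5/7)) := by
  obtain ⟨hc1, hc2⟩ := hc
  intro a b fc gc fc' gc' e d V₁ N₁ V₂ N₂
  have hV₁ : V₁ = 112 * c - 6 := by
    show coeff (Finsupp.single 0 1 + Finsupp.single 1 2 : Fin 2 →₀ ℕ)
      (((-C (1/2 : ℝ) + C (2 * c - 1/2) * X 0 + 2 * X 1) ^ 4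
        - (C (1/2 : ℝ) + C (2 * c + 1/2) * X 0 + X 1) ^ 4) * (-2 + 4 * X 0 - 4 * X 1 + 16 * X 0 * X 1 - 8 * X 1 ^ 2 + 48 * X 0 * X 1 ^ 2)) = _
    rw [quant4]
    ring
  have hN₁ : N₁ = 12 - 30 * c := by
    show coeff (Finsupp.single 0 1 + Finsupp.single 1 2 : Fin 2 →₀ ℕ)
      (((-C (1/2 : ℝ) + C (2 * c - 1/2) * X 0 + 2 * X 1) ^ 5
        - (C (1/2 : ℝ) + C (2 * c + 1/2) * X 0 + X 1) ^ 5) * (-2 + 4 * X 0 - 4 * X 1 + 16 * X 0 * X 1 - 8 * X 1 ^ 2 + 48 * X 0 * X 1 ^ 2)) = _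
    rw [quant5]
    ring
  have hV₂ : V₂ = 106 - 112 * c := by
    show coeff (Finsupp.single 0 1 + Finsupp.single 1 2 : Fin 2 →₀ ℕ)
      (((-C (1/2 : ℝ) + C (2 * (1 - c) - 1/2) * X 0 + 2 * X 1) ^ 4
        - (C (1/2 : ℝ) + C (2 * (1 - c) + 1/2) * X 0 + X 1) ^ 4) * (-2 + 4 * X 0 - 4 * X 1 + 16 * X 0 * X 1 - 8 * X 1 ^ 2 + 48 * X 0 * X 1 ^ 2)) = _
    rw [quant4]
    ring
  have hN₂ : N₂ = 30 * c - 18 := by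
    show coeff (Finsupp.single 0 1 + Finsupp.single 1 2 : Fin 2 →₀ ℕ)
      (((-C (1/2 : ℝ) + C (2 * (1 - c) - 1/2) * X 0 + 2 * X 1) ^ 5
        - (C (1/2 : ℝ) + C (2 * (1 - c) + 1/2) * X 0 + X 1) ^ 5) * (-2 + 4 * X 0 - 4 * X 1 + 16 * X 0 * X 1 - 8 * X 1 ^ 2 + 48 * X 0 * X 1 ^ 2)) = _
    rw [quant5]
    ring
  rw [hV₁, hN₁, hV₂, hN₂]
  have h1 : 112 * c - 6 ≠ 0 := by nlinarith
  have h2 : 106 - 112 * c ≠ 0 := by nlinarith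
  have h3 : 56 * c - 3 ≠ 0 := by nlinarith
  have h4 : 56 * c - 53 ≠ 0 := by nlinarith
  have h34 : (56 * c - 3) * (56 * c - 53) ≠ 0 := mul_ne_zero h3 h4
  have heq : (12 - 30 * c) / (112 * c - 6) + (30 * c - 18) / (106 - 112 * c)
      = -15 * (112 * c ^ 2 - 112 * c + 23) / ((56 * c - 3) * (56 * c - 53)) := by
    rw [div_add_div _ _ h1 h2, div_eq_div_iff (mul_ne_zero h1 h2) h34]
    ring
  refine ⟨h1, h2, heq, ?_⟩
  rw [heq]
  have hs : Real.sqrt (5/7) ^ 2 = 5/7 := Real.sq_sqrt (by norm_num)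
  have hfac : 112 * c ^ 2 - 112 * c + 23
      = 112 * (c - (1/2 + (1/4) * Real.sqrt (5/7))) * (c - (1/2 - (1/4) * Real.sqrt (5/7))) := by
    linear_combination (7 : ℝ) * hs
  constructor
  · intro h
    rw [div_eq_zero_iff] at h
    rcases h with h | h
    · have h' : 112 * c ^ 2 - 112 * c + 23 = 0 := by linarith [h]
      rw [hfac] at h'
      rcases mul_eq_zero.mp h' with h'' | h''
      · rcases mul_eq_zero.mp h'' with h3 | h3
        · norm_num at h3
        · left; linarith [sub_eq_zero.mp h3]
      · right; linarith [sub_eq_zero.mp h'']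
    · exact absurd h h34
  · intro h
    have hnum : 112 * c ^ 2 - 112 * c + 23 = 0 := by
      rw [hfac]
      rcases h with h | h
      · rw [h]; ring
      · rw [h]; ring
    rw [hnum]
    simp
end
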